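/- Let (H, Δ, ε, [−,−,−]) be a Hopf heap over a field k and let ∘ : H ⊗ H → H be an associative bilinear multiplication such that Δ(a∘b) = (a₁∘b₁) ⊗ (a₂∘b₂) and ε(a∘b) = ε(a)ε(b) (i.e. (H,∘,Δ,ε) is a nonunital bialgebra). If a∘[b,c,d] = [a₁∘b, a₂∘c, a₃∘d] for all a,b,c,d ∈ H, then for every group-like element x ∈ H the map σ_x(a) := a∘x is a coalgebra endomorphism of H, and in the Hopf algebra H_x(H) one has a∘(b ·_x c) = (a₁∘b) ·_x S_x(σ_x(a₂)) ·_x (a₃∘c) for all a,b,c ∈ H; that is, (H_x(H), ∘, σ_x) is a Hopf truss. -/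

import Mathlib

/-!
In `H_x(C)` the bracket is recovered as `[u,v,w] = u ·ₓ Sₓ(v) ·ₓ w`: by associativity of the
bracket, `[[u,x,[x,v,x]],x,w] = [[u,x,x],v,[x,x,w]]`, and `[x,x,-] = id = [-,x,x]` because `x` is
group-like. Hence
`a∘(b ·ₓ c) = a∘[b,x,c] = [a₁∘b, a₂∘x, a₃∘c] = (a₁∘b) ·ₓ Sₓ(σₓ(a₂)) ·ₓ (a₃∘c)`.
That `σₓ` is a coalgebra map only uses that `∘` is one and `x` is group-like.
-/

open TensorProduct

noncomputable section

variable (k : Type*) [Field k]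

section Shuffles

variable (A B P Q R S : Type*)
  [AddCommGroup A] [Module k A] [AddCommGroup B] [Module k B]
  [AddCommGroup P] [Module k P] [AddCommGroup Q] [Module k Q]
  [AddCommGroup R] [Module k R] [AddCommGroup S] [Module k S]

/-- `(a ⊗ b) ⊗ ((p ⊗ q) ⊗ (r ⊗ s)) ↦ (a ⊗ (q ⊗ r)) ⊗ (b ⊗ (p ⊗ s))`, the shuffle appearing in
the compatibility of a Hopf-heap bracket with comultiplication:
`Δ([a,b,c]) = [a₁,b₂,c₁] ⊗ [a₂,b₁,c₂]`. -/
def sweedlerShuffle :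
    ((A ⊗[k] B) ⊗[k] ((P ⊗[k] Q) ⊗[k] (R ⊗[k] S))) →ₗ[k]
      ((A ⊗[k] (Q ⊗[k] R)) ⊗[k] (B ⊗[k] (P ⊗[k] S))) :=
  (tensorTensorTensorComm k A B (Q ⊗[k] R) (P ⊗[k] S)).toLinearMap ∘ₗ
    (TensorProduct.map LinearMap.id
      ((tensorTensorTensorComm k Q P R S).toLinearMap ∘ₗ
        TensorProduct.map (TensorProduct.comm k P Q).toLinearMap LinearMap.id))

/-- `u₁ ⊗ (u₂ ⊗ (u₃ ⊗ u₄)) ↦ (u₁ ⊗ (u₄ ⊗ u₂)) ⊗ u₃`, the shuffle appearing in the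
Rota–Baxter identity. -/
def rbShuffle :
    (A ⊗[k] (P ⊗[k] (Q ⊗[k] R))) →ₗ[k] ((A ⊗[k] (R ⊗[k] P)) ⊗[k] Q) :=
  (TensorProduct.assoc k A (R ⊗[k] P) Q).symm.toLinearMap ∘ₗ
    TensorProduct.map LinearMap.id
      ((TensorProduct.comm k Q (R ⊗[k] P)).toLinearMap ∘ₗ
        (TensorProduct.assoc k Q R P).toLinearMap ∘ₗ
        (TensorProduct.comm k P (Q ⊗[k] R)).toLinearMap)

end Shuffles

section Mul

variable {C : Type*} [AddCommGroup C] [Module k C]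

/-- Right multiplication `a ↦ μ (a ⊗ b)` by a fixed element, for a bilinear product `μ`. -/
def rmulBy (μ : (C ⊗[k] C) →ₗ[k] C) (b : C) : C →ₗ[k] C :=
  μ ∘ₗ ((TensorProduct.mk k C C).flip b)

end Mul

section Heap

variable {C : Type*} [AddCommGroup C] [Module k C] [Coalgebra k C]

/-- Iterated comultiplication `a ↦ a₁ ⊗ (a₂ ⊗ a₃)`. -/
def comul2 : C →ₗ[k] (C ⊗[k] (C ⊗[k] C)) :=
  (TensorProduct.map LinearMap.id Coalgebra.comul) ∘ₗ Coalgebra.comul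

/-- Iterated comultiplication `a ↦ a₁ ⊗ (a₂ ⊗ (a₃ ⊗ a₄))`. -/
def comul3 : C →ₗ[k] (C ⊗[k] (C ⊗[k] (C ⊗[k] C))) :=
  (TensorProduct.map LinearMap.id (comul2 k)) ∘ₗ Coalgebra.comul

/-- The pointwise ternary bracket `[a,b,c]` of a Hopf heap with structure map `χ`. -/
def br (χ : (C ⊗[k] (C ⊗[k] C)) →ₗ[k] C) (a b c : C) : C := χ (a ⊗ₜ[k] (b ⊗ₜ[k] c))

/-- `x` is a group-like element of the coalgebra `C`. -/
def IsGrouplike (x : C) : Prop :=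
  Coalgebra.comul (R := k) x = x ⊗ₜ[k] x ∧ Coalgebra.counit (R := k) x = 1

/-- `(C, Δ, ε, χ)` is a Hopf heap: `χ` is a coalgebra map `C ⊗ C^cop ⊗ C → C`
(counit and comultiplication conditions, the latter in the Sweedler form
`Δ([a,b,c]) = [a₁,b₂,c₁] ⊗ [a₂,b₁,c₂]`), the bracket is associative
(`[[a,b,c],d,h] = [a,b,[c,d,h]]`), and `[c₁,c₂,a] = ε(c)a = [a,c₁,c₂]`. -/
structure IsHopfHeap (χ : (C ⊗[k] (C ⊗[k] C)) →ₗ[k] C) : Prop where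
  counit_br : ∀ a b c : C,
    Coalgebra.counit (R := k) (br k χ a b c) =
      Coalgebra.counit (R := k) a * Coalgebra.counit (R := k) b * Coalgebra.counit (R := k) c
  comul_br : ∀ a b c : C,
    Coalgebra.comul (R := k) (br k χ a b c) =
      TensorProduct.map χ χ (sweedlerShuffle k C C C C C C
        ((Coalgebra.comul (R := k) a) ⊗ₜ[k]
          ((Coalgebra.comul (R := k) b) ⊗ₜ[k] (Coalgebra.comul (R := k) c))))
  assoc_br : ∀ a b c d h : C,
    br k χ (br k χ a b c) d h = br k χ a b (br k χ c d h)
  left_cancel : ∀ c a : C,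
    χ ((TensorProduct.assoc k C C C) ((Coalgebra.comul (R := k) c) ⊗ₜ[k] a)) =
      Coalgebra.counit (R := k) c • a
  right_cancel : ∀ c a : C,
    χ (a ⊗ₜ[k] (Coalgebra.comul (R := k) c)) = Coalgebra.counit (R := k) c • a

/-- `B` is a Rota–Baxter operator on the Hopf heap `(C, Δ, χ)`:
`B [a,b,c] = [B a, B b, B c]` and
`B(a₁) ⊗ B(a₂) = [B(a)₁, B(B(a)₄), B(B(a)₂)] ⊗ B(a)₃`. -/
structure IsRBOp (χ : (C ⊗[k] (C ⊗[k] C)) →ₗ[k] C) (B : C →ₗ[k] C) : Prop where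
  map_br : ∀ a b c : C, B (br k χ a b c) = br k χ (B a) (B b) (B c)
  rb : ∀ a : C,
    TensorProduct.map B B (Coalgebra.comul (R := k) a) =
      TensorProduct.map (χ ∘ₗ TensorProduct.map LinearMap.id (TensorProduct.map B B))
        LinearMap.id (rbShuffle k C C C C (comul3 k (B a)))

/-- The multiplication `a ·ₓ b = [a, x, b]` of the Hopf algebra `H_x(C)`, as a linear map. -/
def heapMul (χ : (C ⊗[k] (C ⊗[k] C)) →ₗ[k] C) (x : C) : (C ⊗[k] C) →ₗ[k] C :=
  χ ∘ₗ TensorProduct.map LinearMap.id (TensorProduct.mk k C C x)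

/-- The antipode `S_x(a) = [x, a, x]` of the Hopf algebra `H_x(C)`, as a linear map. -/
def heapAntipode (χ : (C ⊗[k] (C ⊗[k] C)) →ₗ[k] C) (x : C) : C →ₗ[k] C :=
  χ ∘ₗ (TensorProduct.mk k C (C ⊗[k] C) x) ∘ₗ ((TensorProduct.mk k C C).flip x)

end Heap

section HeapHom

variable {C D : Type*} [AddCommGroup C] [Module k C] [Coalgebra k C]
  [AddCommGroup D] [Module k D] [Coalgebra k D]

/-- `f` is a homomorphism of Hopf heaps: a coalgebra map preserving the bracket. -/
def IsHeapHom (χC : (C ⊗[k] (C ⊗[k] C)) →ₗ[k] C) (χD : (D ⊗[k] (D ⊗[k] D)) →ₗ[k] D)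
    (f : C →ₗ[k] D) : Prop :=
  (∀ a : C, Coalgebra.comul (R := k) (f a) = TensorProduct.map f f (Coalgebra.comul (R := k) a)) ∧
  (∀ a : C, Coalgebra.counit (R := k) (f a) = Coalgebra.counit (R := k) a) ∧
  (∀ a b c : C, f (br k χC a b c) = br k χD (f a) (f b) (f c))

end HeapHom

section HopfAlg

variable (H : Type*) [Ring H] [HopfAlgebra k H]

/-- The Hopf-heap structure map `a ⊗ b ⊗ c ↦ a · S(b) · c` of a Hopf algebra. -/
def hopfHeapChi : (H ⊗[k] (H ⊗[k] H)) →ₗ[k] H :=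
  (LinearMap.mul' k H) ∘ₗ TensorProduct.map LinearMap.id
    ((LinearMap.mul' k H) ∘ₗ TensorProduct.map (HopfAlgebra.antipode (R := k)) LinearMap.id)

/-- The triple multiplication `a ⊗ (b ⊗ c) ↦ a·(b·c)`. -/
def mulTriple : (H ⊗[k] (H ⊗[k] H)) →ₗ[k] H :=
  (LinearMap.mul' k H) ∘ₗ TensorProduct.map LinearMap.id (LinearMap.mul' k H)

end HopfAlg

end

section HopfHeap

variable {k : Type*} [Field k] {H : Type*} [AddCommGroup H] [Module k H]
  {χ : (H ⊗[k] (H ⊗[k] H)) →ₗ[k] H} {x : H}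

theorem heapMul_tmul (a b : H) : heapMul k χ x (a ⊗ₜ[k] b) = br k χ a x b := rfl

theorem heapAntipode_apply (a : H) : heapAntipode k χ x a = br k χ x a x := rfl

namespace IsHopfHeap

variable [Coalgebra k H]

theorem br_self_left (hχ : IsHopfHeap k χ) (hx : IsGrouplike k x) (a : H) :
    br k χ x x a = a := by
  simpa [br, hx.1, hx.2] using hχ.left_cancel x a

theorem br_self_right (hχ : IsHopfHeap k χ) (hx : IsGrouplike k x) (a : H) :
    br k χ a x x = a := by
  simpa [br, hx.1, hx.2] using hχ.right_cancel x a

theorem heapMul_heapMul_heapAntipode (hχ : IsHopfHeap k χ) (hx : IsGrouplike k x)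
    (u v w : H) :
    heapMul k χ x (heapMul k χ x (u ⊗ₜ[k] heapAntipode k χ x v) ⊗ₜ[k] w) =
      br k χ u v w := by
  rw [heapMul_tmul, heapMul_tmul, heapAntipode_apply, hχ.assoc_br, hχ.assoc_br,
    hχ.br_self_left hx, ← hχ.assoc_br, hχ.br_self_right hx]

theorem apply_eq_heapMul (hχ : IsHopfHeap k χ) (hx : IsGrouplike k x)
    (t : H ⊗[k] (H ⊗[k] H)) :
    χ t = heapMul k χ x (TensorProduct.map (heapMul k χ x) LinearMap.id
      ((TensorProduct.assoc k H H H).symm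
        (TensorProduct.map LinearMap.id
          (TensorProduct.map (heapAntipode k χ x) LinearMap.id) t))) := by
  suffices χ = heapMul k χ x ∘ₗ TensorProduct.map (heapMul k χ x) LinearMap.id ∘ₗ
      (TensorProduct.assoc k H H H).symm.toLinearMap ∘ₗ
        TensorProduct.map LinearMap.id (TensorProduct.map (heapAntipode k χ x) LinearMap.id) from
    congrArg (· t) this
  refine TensorProduct.ext_threefold' fun u v w => ?_
  exact (hχ.heapMul_heapMul_heapAntipode hx u v w).symm

end IsHopfHeap

end HopfHeap

section RightMul

variable {k : Type*} [Field k] {H : Type*} [AddCommGroup H] [Module k H] [Coalgebra k H]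
  {μ : (H ⊗[k] H) →ₗ[k] H} {x : H}

theorem comul_rmulBy_of_comul_eq_tmul_self
    (hcomul : ∀ a b : H, Coalgebra.comul (R := k) (μ (a ⊗ₜ[k] b)) =
      TensorProduct.map μ μ ((tensorTensorTensorComm k H H H H)
        ((Coalgebra.comul (R := k) a) ⊗ₜ[k] (Coalgebra.comul (R := k) b))))
    (hx : Coalgebra.comul (R := k) x = x ⊗ₜ[k] x) (a : H) :
    Coalgebra.comul (R := k) (rmulBy k μ x a) =
      TensorProduct.map (rmulBy k μ x) (rmulBy k μ x) (Coalgebra.comul (R := k) a) := by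
  rw [rmulBy, LinearMap.comp_apply, LinearMap.flip_apply, TensorProduct.mk_apply, hcomul, hx]
  induction Coalgebra.comul (R := k) a using TensorProduct.induction_on with
  | zero => simp
  | tmul p q => simp [tensorTensorTensorComm_tmul]
  | add s t hs ht => simp only [map_add, TensorProduct.add_tmul, hs, ht]

theorem counit_rmulBy_of_counit_eq_one (hcounit : ∀ a b : H,
      Coalgebra.counit (R := k) (μ (a ⊗ₜ[k] b)) =
        Coalgebra.counit (R := k) a * Coalgebra.counit (R := k) b)
    (hx : Coalgebra.counit (R := k) x = 1) (a : H) :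
    Coalgebra.counit (R := k) (rmulBy k μ x a) = Coalgebra.counit (R := k) a := by
  simp [rmulBy, hcounit, hx]

end RightMul

theorem hopfHeap_distributive_gives_hopfTruss_general {k : Type*} [Field k] {H : Type*}
    [AddCommGroup H] [Module k H] [Coalgebra k H]
    (χ : (H ⊗[k] (H ⊗[k] H)) →ₗ[k] H) (hχ : IsHopfHeap k χ)
    (μ : (H ⊗[k] H) →ₗ[k] H)
    (hcomul : ∀ a b : H, Coalgebra.comul (R := k) (μ (a ⊗ₜ[k] b)) =
      TensorProduct.map μ μ ((tensorTensorTensorComm k H H H H)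
        ((Coalgebra.comul (R := k) a) ⊗ₜ[k] (Coalgebra.comul (R := k) b))))
    (hcounit : ∀ a b : H, Coalgebra.counit (R := k) (μ (a ⊗ₜ[k] b)) =
      Coalgebra.counit (R := k) a * Coalgebra.counit (R := k) b)
    (hdist : ∀ a b c d : H, μ (a ⊗ₜ[k] br k χ b c d) =
      χ ((TensorProduct.map (rmulBy k μ b)
        (TensorProduct.map (rmulBy k μ c) (rmulBy k μ d))) (comul2 k a)))
    (x : H) (hx : IsGrouplike k x) :
    -- `σ_x : a ↦ a ∘ x` is a coalgebra endomorphism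
    (∀ a : H, Coalgebra.comul (R := k) (rmulBy k μ x a) =
      TensorProduct.map (rmulBy k μ x) (rmulBy k μ x) (Coalgebra.comul (R := k) a)) ∧
    (∀ a : H, Coalgebra.counit (R := k) (rmulBy k μ x a) = Coalgebra.counit (R := k) a) ∧
    -- truss condition `a∘(b ·ₓ c) = (a₁∘b) ·ₓ S_x(σ_x(a₂)) ·ₓ (a₃∘c)`
    (∀ a b c : H, μ (a ⊗ₜ[k] heapMul k χ x (b ⊗ₜ[k] c)) =
      heapMul k χ x ((TensorProduct.map (heapMul k χ x) LinearMap.id)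
        ((TensorProduct.assoc k H H H).symm
          ((TensorProduct.map (rmulBy k μ b)
            (TensorProduct.map ((heapAntipode k χ x) ∘ₗ (rmulBy k μ x)) (rmulBy k μ c)))
            (comul2 k a))))) := by
  refine ⟨comul_rmulBy_of_comul_eq_tmul_self hcomul hx.1,
    counit_rmulBy_of_counit_eq_one hcounit hx.2, fun a b c => ?_⟩
  rw [heapMul_tmul, hdist, hχ.apply_eq_heapMul hx, ← LinearMap.comp_apply
    (TensorProduct.map LinearMap.id (TensorProduct.map (heapAntipode k χ x) LinearMap.id)),
    ← TensorProduct.map_comp, ← TensorProduct.map_comp, LinearMap.id_comp, LinearMap.id_comp]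

/-- if `(H,χ)` is a Hopf heap, `∘ = μ` a nonunital bialgebra multiplication with
`a∘[b,c,d] = [a₁∘b, a₂∘c, a₃∘d]`, then for every group-like `x`, `σ_x(a) := a∘x` is a coalgebra
endomorphism and `(H_x(H), ∘, σ_x)` is a Hopf truss:
`a∘(b ·ₓ c) = (a₁∘b) ·ₓ S_x(σ_x(a₂)) ·ₓ (a₃∘c)`. -/
theorem hopfHeap_distributive_gives_hopfTruss {k : Type*} [Field k] {H : Type*}
    [AddCommGroup H] [Module k H] [Coalgebra k H]
    (χ : (H ⊗[k] (H ⊗[k] H)) →ₗ[k] H) (hχ : IsHopfHeap k χ)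
    (μ : (H ⊗[k] H) →ₗ[k] H)
    (hassoc : ∀ a b c : H, μ (μ (a ⊗ₜ[k] b) ⊗ₜ[k] c) = μ (a ⊗ₜ[k] μ (b ⊗ₜ[k] c)))
    (hcomul : ∀ a b : H, Coalgebra.comul (R := k) (μ (a ⊗ₜ[k] b)) =
      TensorProduct.map μ μ ((tensorTensorTensorComm k H H H H)
        ((Coalgebra.comul (R := k) a) ⊗ₜ[k] (Coalgebra.comul (R := k) b))))
    (hcounit : ∀ a b : H, Coalgebra.counit (R := k) (μ (a ⊗ₜ[k] b)) =
      Coalgebra.counit (R := k) a * Coalgebra.counit (R := k) b)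
    (hdist : ∀ a b c d : H, μ (a ⊗ₜ[k] br k χ b c d) =
      χ ((TensorProduct.map (rmulBy k μ b)
        (TensorProduct.map (rmulBy k μ c) (rmulBy k μ d))) (comul2 k a)))
    (x : H) (hx : IsGrouplike k x) :
    -- `σ_x : a ↦ a ∘ x` is a coalgebra endomorphism
    (∀ a : H, Coalgebra.comul (R := k) (rmulBy k μ x a) =
      TensorProduct.map (rmulBy k μ x) (rmulBy k μ x) (Coalgebra.comul (R := k) a)) ∧
    (∀ a : H, Coalgebra.counit (R := k) (rmulBy k μ x a) = Coalgebra.counit (R := k) a) ∧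
    -- truss condition `a∘(b ·ₓ c) = (a₁∘b) ·ₓ S_x(σ_x(a₂)) ·ₓ (a₃∘c)`
    (∀ a b c : H, μ (a ⊗ₜ[k] heapMul k χ x (b ⊗ₜ[k] c)) =
      heapMul k χ x ((TensorProduct.map (heapMul k χ x) LinearMap.id)
        ((TensorProduct.assoc k H H H).symm
          ((TensorProduct.map (rmulBy k μ b)
            (TensorProduct.map ((heapAntipode k χ x) ∘ₗ (rmulBy k μ x)) (rmulBy k μ c)))
            (comul2 k a))))) :=
  hopfHeap_distributive_gives_hopfTruss_general χ hχ μ hcomul hcounit hdist x hx
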